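/- Let d ≥ 1 be an integer and let 0 < α < 1, λ > 0, ρ, M > 0, 0 < γ ≤ 1, ε ≥ 0, K ≥ 1, τ₁ > 0 be real numbers with γ ≤ λ/4, ε ≤ λ/4 and ε·M ≤ 1/4. Let O ⊆ ℝ^d be Lebesgue measurable and let ω : O → ℝ^d satisfy ‖ω(ξ)‖ ≤ ρ for all ξ ∈ O and ‖ξ − η‖ ≤ M·‖ω(ξ) − ω(η)‖ for all ξ, η ∈ O. For each n ∈ ℤ let Ω_n : O → ℝ satisfy |Ω_n(ξ) − |n|^α − λ| ≤ ε for all ξ ∈ O and |Ω_n(ξ) − Ω_n(η)| ≤ ε·‖ξ − η‖ for all ξ, η ∈ O. Then there is a constant C depending only on d, α, λ, ρ and M such that meas(⋃_{k ∈ ℤ^d, ‖k‖_∞ ≤ K} ⋃_{n ∈ ℤ} {ξ ∈ O : |⟨k, ω(ξ)⟩ + Ω_n(ξ)| ≤ γ·K^{−2τ₁}}) ≤ C·γ^{1/2}·K^{−(τ₁ − d − 2/α)}. -/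

import Mathlib

/-!
Fix `k ≠ 0` and `n`, and let `δ = γ K^(-2τ₁)`. Because `ω` has an `M`-Lipschitz inverse and
`Ω n` is `ε`-Lipschitz with `ε M ≤ 1/4`, the image under `ω` of the resonant set is a subset `A`
of the `ρ`-ball that is thin in the direction `u = k / ‖k‖`: `|⟪u, a - b⟫| ≤ 2δ + ‖a - b‖ / 4`.
Hence the translates `A + 4iδ • u`, `0 ≤ i ≤ ρ / 4δ`, are pairwise separated and lie in the
`2ρ`-ball, so `vol A = O(δ / ρ)`; pulling back through `ω⁻¹` costs a factor `M^d`. Resonance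
forces `|n|^α < |⟪k, ω ξ⟫| ≤ d ρ K`, which excludes `k = 0` and leaves `O(K^(1/α))` values of
`n` for each of the `O(K^d)` values of `k`. The total `O(γ K^(d + 1/α - 2τ₁))` is below the
claimed bound.
-/

open MeasureTheory Metric RealInnerProductSpace Pointwise

section Haar

variable {E : Type*} [NormedAddCommGroup E] [NormedSpace ℝ E] [FiniteDimensional ℝ E]
  [MeasurableSpace E] [BorelSpace E] (μ : Measure E) [μ.IsAddHaarMeasure]

theorem LipschitzOnWith.addHaar_image_le {K : NNReal} {f : E → E} {s : Set E}
    (hf : LipschitzOnWith K f s) :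
    μ (f '' s) ≤ (K : ENNReal) ^ Module.finrank ℝ E * μ s := by
  -- `μH[finrank ℝ E]` is itself an additive Haar measure, hence a multiple `c • μ` of `μ`.
  set c := (μH[(Module.finrank ℝ E : ℝ)] : Measure E).addHaarScalarFactor μ
  have hμH : ∀ t, μH[(Module.finrank ℝ E : ℝ)] t = c * μ t := fun t => by
    rw [Measure.isAddLeftInvariant_eq_smul μH[(Module.finrank ℝ E : ℝ)] μ]; rfl
  have hc : (c : ENNReal) ≠ 0 :=
    ENNReal.coe_ne_zero.2 (Measure.addHaarScalarFactor_pos_of_isAddHaarMeasure _ _).ne'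
  have h := hf.hausdorffMeasure_image_le (Nat.cast_nonneg (Module.finrank ℝ E))
  rw [hμH, hμH, mul_left_comm, ENNReal.rpow_natCast] at h
  exact (ENNReal.mul_le_mul_iff_right hc ENNReal.coe_ne_top).1 h

theorem addHaar_le_of_dist_le_mul {K : NNReal} {f : E → E} {s : Set E}
    (hf : ∀ x ∈ s, ∀ y ∈ s, dist x y ≤ K * dist (f x) (f y)) :
    μ s ≤ (K : ENNReal) ^ Module.finrank ℝ E * μ (f '' s) := by
  have hinj : s.InjOn f := fun x hx y hy hxy => by
    simpa [hxy] using hf x hx y hy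
  have hinv := hinj.leftInvOn_invFunOn
  have hlip : LipschitzOnWith K (Function.invFunOn f s) (f '' s) := by
    refine LipschitzOnWith.of_dist_le_mul ?_
    rintro _ ⟨x, hx, rfl⟩ _ ⟨y, hy, rfl⟩
    rw [hinv hx, hinv hy]
    exact hf x hx y hy
  calc μ s = μ (Function.invFunOn f s '' (f '' s)) := by rw [hinv.image_image]
    _ ≤ _ := hlip.addHaar_image_le μ

end Haar

theorem sum_measure_le_measure_thickening {X ι : Type*} [PseudoMetricSpace X]
    [MeasurableSpace X] [OpensMeasurableSpace X] (μ : Measure X) (s : Finset ι) (A : ι → Set X)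
    {c : ℝ} (hc : 0 < c)
    (hsep : (s : Set ι).Pairwise fun i j => ∀ x ∈ A i, ∀ y ∈ A j, 2 * c ≤ dist x y) :
    ∑ i ∈ s, μ (A i) ≤ μ (thickening c (⋃ i ∈ s, A i)) := by
  have hdisj : (s : Set ι).PairwiseDisjoint fun i => thickening c (A i) := by
    refine hsep.mono' fun i j hij => Set.disjoint_left.2 fun z hzi hzj => ?_
    obtain ⟨x, hx, hzx⟩ := mem_thickening_iff.1 hzi
    obtain ⟨y, hy, hzy⟩ := mem_thickening_iff.1 hzj
    have := dist_triangle_left x y z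
    linarith [hij x hx y hy]
  calc ∑ i ∈ s, μ (A i) ≤ ∑ i ∈ s, μ (thickening c (A i)) :=
        Finset.sum_le_sum fun i _ => measure_mono (self_subset_thickening hc _)
    _ = μ (⋃ i ∈ s, thickening c (A i)) :=
        (measure_biUnion_finset hdisj fun i _ => isOpen_thickening.measurableSet).symm
    _ ≤ μ (thickening c (⋃ i ∈ s, A i)) :=
        measure_mono (Set.iUnion₂_subset fun i hi =>
          thickening_subset_of_subset _ (Set.subset_biUnion_of_mem (u := A) hi))

section Thin

variable {E : Type*} [NormedAddCommGroup E] [InnerProductSpace ℝ E]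

theorem le_norm_add_smul_of_abs_inner_le {u z : E} (hu : ‖u‖ = 1) {h t : ℝ}
    (hz : |⟪u, z⟫| ≤ h + ‖z‖ / 4) (ht : 2 * h ≤ |t|) :
    2 * h / 5 ≤ ‖z + t • u‖ := by
  have hinner : ⟪u, z + t • u⟫ = ⟪u, z⟫ + t := by
    rw [inner_add_right, inner_smul_right, real_inner_self_eq_norm_sq, hu]; ring
  have hcs : |⟪u, z + t • u⟫| ≤ ‖z + t • u‖ := by
    simpa [hu] using abs_real_inner_le_norm u (z + t • u)
  have hz' : ‖z‖ ≤ ‖z + t • u‖ + |t| := by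
    simpa [norm_smul, hu] using norm_sub_le (z + t • u) (t • u)
  have : |t| ≤ |⟪u, z + t • u⟫| + |⟪u, z⟫| := by
    rw [hinner]; simpa using abs_sub (⟪u, z⟫ + t) ⟪u, z⟫
  linarith

theorem natCast_add_one_mul_measure_le_of_abs_inner_sub_le [MeasurableSpace E] [BorelSpace E]
    (μ : Measure E) [μ.IsAddLeftInvariant] {A : Set E} {u : E} (hu : ‖u‖ = 1) {h ρ : ℝ}
    (hh : 0 < h) (hρ : 0 ≤ ρ) {N : ℕ} (hN : N * (2 * h) ≤ ρ) (hA : A ⊆ closedBall 0 ρ)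
    (hthin : ∀ a ∈ A, ∀ b ∈ A, |⟪u, a - b⟫| ≤ h + ‖a - b‖ / 4) :
    ((N : ENNReal) + 1) * μ A ≤ μ (ball 0 (2 * ρ + h)) := by
  set T : ℕ → Set E := fun i => ((i * (2 * h) : ℝ) • u) +ᵥ A
  have hsep : (Finset.range (N + 1) : Set ℕ).Pairwise
      fun i j => ∀ x ∈ T i, ∀ y ∈ T j, 2 * (h / 5) ≤ dist x y := by
    rintro i - j - hij _ ⟨a, ha, rfl⟩ _ ⟨b, hb, rfl⟩
    have hij' : (1 : ℝ) ≤ |(i : ℝ) - j| := by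
      exact_mod_cast Int.one_le_abs (sub_ne_zero.2 (Int.ofNat_inj.not.2 hij))
    have hxy : (((i : ℝ) * (2 * h)) • u +ᵥ a) - (((j : ℝ) * (2 * h)) • u +ᵥ b)
        = (a - b) + (((i : ℝ) - j) * (2 * h)) • u := by
      rw [vadd_eq_add, vadd_eq_add, sub_mul, sub_smul]; abel
    have key := le_norm_add_smul_of_abs_inner_le hu (hthin a ha b hb)
      (t := ((i : ℝ) - j) * (2 * h))
      (by rw [abs_mul, abs_of_pos (by positivity : (0 : ℝ) < 2 * h)]; nlinarith)
    dsimp only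
    rw [dist_eq_norm, hxy]; linarith
  have hT : (⋃ i ∈ Finset.range (N + 1), T i) ⊆ closedBall 0 (2 * ρ) := by
    refine Set.iUnion₂_subset fun i hi => ?_
    rintro _ ⟨a, ha, rfl⟩
    have hiN : (i : ℝ) * (2 * h) ≤ N * (2 * h) := by
      gcongr; exact_mod_cast Finset.mem_range_succ_iff.1 hi
    have := mem_closedBall_zero_iff.1 (hA ha)
    dsimp only
    rw [mem_closedBall_zero_iff, vadd_eq_add]
    calc ‖((i : ℝ) * (2 * h)) • u + a‖ ≤ (i : ℝ) * (2 * h) + ‖a‖ := by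
          simpa [norm_smul, hu, abs_of_pos hh] using norm_add_le (((i : ℝ) * (2 * h)) • u) a
      _ ≤ 2 * ρ := by linarith
  calc ((N : ENNReal) + 1) * μ A = ∑ i ∈ Finset.range (N + 1), μ (T i) := by
        simp [T, measure_vadd]
    _ ≤ μ (thickening (h / 5) (⋃ i ∈ Finset.range (N + 1), T i)) :=
        sum_measure_le_measure_thickening μ _ T (by positivity) hsep
    _ ≤ μ (thickening (h / 5) (closedBall 0 (2 * ρ))) :=
        measure_mono (thickening_subset_of_subset _ hT)
    _ ≤ μ (ball 0 (2 * ρ + h)) := by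
        rw [thickening_closedBall (by positivity) (by positivity)]
        exact measure_mono (ball_subset_ball (by linarith))

theorem measure_le_of_abs_inner_sub_le [MeasurableSpace E] [BorelSpace E] (μ : Measure E)
    [μ.IsAddLeftInvariant] {A : Set E} {u : E} (hu : ‖u‖ = 1) {h ρ : ℝ} (hh : 0 < h)
    (hρ : 0 < ρ) (hA : A ⊆ closedBall 0 ρ)
    (hthin : ∀ a ∈ A, ∀ b ∈ A, |⟪u, a - b⟫| ≤ h + ‖a - b‖ / 4) :
    μ A ≤ ENNReal.ofReal (2 * h / ρ) * μ (ball 0 (2 * ρ + h)) := by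
  set N := ⌊ρ / (2 * h)⌋₊
  have hpack := natCast_add_one_mul_measure_le_of_abs_inner_sub_le μ hu hh hρ.le
    (N := N) ((le_div_iff₀ (by positivity)).1 (Nat.floor_le (by positivity))) hA hthin
  have hN : ENNReal.ofReal (ρ / (2 * h)) ≤ (N : ENNReal) + 1 := by
    rw [← ENNReal.ofReal_natCast, ← ENNReal.ofReal_one,
      ← ENNReal.ofReal_add (by positivity) zero_le_one]
    exact ENNReal.ofReal_le_ofReal (Nat.lt_floor_add_one _).le
  calc μ A = ENNReal.ofReal (2 * h / ρ) * (ENNReal.ofReal (ρ / (2 * h)) * μ A) := by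
        rw [← mul_assoc, ← ENNReal.ofReal_mul (by positivity),
          show 2 * h / ρ * (ρ / (2 * h)) = 1 by field_simp, ENNReal.ofReal_one, one_mul]
    _ ≤ _ := by gcongr; exact (by gcongr : _ ≤ ((N : ENNReal) + 1) * μ A).trans hpack

end Thin

theorem EuclideanSpace.real_inner_toLp_left {ι : Type*} [Fintype ι] (c : ι → ℝ)
    (x : EuclideanSpace ℝ ι) : ⟪WithLp.toLp 2 c, x⟫ = ∑ i, c i * x i :=
  Finset.sum_congr rfl fun _ _ => mul_comm _ _

theorem EuclideanSpace.one_le_norm_toLp_intCast {ι : Type*} [Fintype ι] {k : ι → ℤ}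
    (hk : k ≠ 0) : 1 ≤ ‖WithLp.toLp 2 fun i => (k i : ℝ)‖ := by
  obtain ⟨i, hi⟩ := Function.ne_iff.1 hk
  have hki : (1 : ℝ) ≤ (k i : ℝ) ^ 2 := by
    rw [one_le_sq_iff_one_le_abs]; exact_mod_cast Int.one_le_abs hi
  have hsum : (k i : ℝ) ^ 2 ≤ ‖WithLp.toLp 2 fun i => (k i : ℝ)‖ ^ 2 := by
    rw [EuclideanSpace.real_norm_sq_eq]
    exact Finset.single_le_sum (f := fun i => (k i : ℝ) ^ 2) (fun _ _ => sq_nonneg _)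
      (Finset.mem_univ i)
  nlinarith [norm_nonneg (WithLp.toLp 2 fun i => (k i : ℝ))]

theorem EuclideanSpace.abs_sum_mul_le {d : ℕ} {c : Fin d → ℝ} {K : ℝ} (hc : ∀ i, |c i| ≤ K)
    (x : EuclideanSpace ℝ (Fin d)) : |∑ i, c i * x i| ≤ d * K * ‖x‖ := by
  calc |∑ i, c i * x i| ≤ ∑ i, |c i| * |x i| := by
        simpa only [abs_mul] using Finset.abs_sum_le_sum_abs (fun i => c i * x i) Finset.univ
    _ ≤ ∑ _i : Fin d, K * ‖x‖ := Finset.sum_le_sum fun i _ =>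
        mul_le_mul (hc i) (by simpa using PiLp.norm_apply_le x i) (abs_nonneg _)
          ((abs_nonneg _).trans (hc i))
    _ = d * K * ‖x‖ := by simp [mul_assoc]

theorem mem_Icc_floor_of_abs_le {m : ℤ} {R : ℝ} (hm : (|m| : ℝ) ≤ R) :
    m ∈ Finset.Icc (-⌊R⌋) ⌊R⌋ := by
  rw [Finset.mem_Icc, ← abs_le, Int.le_floor, Int.cast_abs]; exact hm

theorem card_Icc_floor_le {R : ℝ} (hR : 0 ≤ R) :
    ((Finset.Icc (-⌊R⌋) ⌊R⌋).card : ℝ) ≤ 2 * R + 1 := by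
  have h0 : 0 ≤ ⌊R⌋ := Int.floor_nonneg.2 hR
  have hcard : (Finset.Icc (-⌊R⌋) ⌊R⌋).card = 2 * ⌊R⌋.toNat + 1 := by
    rw [Int.card_Icc]; omega
  rw [hcard]
  push_cast
  have : ((⌊R⌋.toNat : ℤ) : ℝ) ≤ R := by rw [Int.toNat_of_nonneg h0]; exact Int.floor_le R
  push_cast at this
  linarith

section Resonance

variable {d : ℕ} {O : Set (EuclideanSpace ℝ (Fin d))}
  {ω : EuclideanSpace ℝ (Fin d) → EuclideanSpace ℝ (Fin d)} {Ω : ℤ → EuclideanSpace ℝ (Fin d) → ℝ}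
  {α lam ε δ ρ M : ℝ}

def resonantSet (O : Set (EuclideanSpace ℝ (Fin d)))
    (ω : EuclideanSpace ℝ (Fin d) → EuclideanSpace ℝ (Fin d)) (Ω : ℤ → EuclideanSpace ℝ (Fin d) → ℝ)
    (δ : ℝ) (k : Fin d → ℤ) (n : ℤ) : Set (EuclideanSpace ℝ (Fin d)) :=
  {ξ ∈ O | |(∑ i, (k i : ℝ) * ω ξ i) + Ω n ξ| ≤ δ}

theorem rpow_abs_lt_of_mem_resonantSet {k : Fin d → ℤ} {n : ℤ} {ξ : EuclideanSpace ℝ (Fin d)}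
    (hξ : ξ ∈ resonantSet O ω Ω δ k n) (hΩ : |Ω n ξ - (|n| : ℝ) ^ α - lam| ≤ ε)
    (hδε : δ + ε < lam) : (|n| : ℝ) ^ α < |∑ i, (k i : ℝ) * ω ξ i| := by
  have hres := hξ.2
  rw [abs_le] at hΩ hres
  have := neg_le_abs (∑ i, (k i : ℝ) * ω ξ i)
  linarith

theorem abs_le_of_mem_resonantSet (hα : 0 < α) (hωρ : ∀ ξ ∈ O, ‖ω ξ‖ ≤ ρ) {K : ℝ} (hK : 0 ≤ K)
    {k : Fin d → ℤ} (hk : ∀ i, (|k i| : ℝ) ≤ K) {n : ℤ} {ξ : EuclideanSpace ℝ (Fin d)}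
    (hξ : ξ ∈ resonantSet O ω Ω δ k n) (hΩ : |Ω n ξ - (|n| : ℝ) ^ α - lam| ≤ ε)
    (hδε : δ + ε < lam) : (|n| : ℝ) ≤ ((d : ℝ) * ρ * K) ^ α⁻¹ := by
  have hρ : 0 ≤ ρ := (norm_nonneg _).trans (hωρ ξ hξ.1)
  have hlt := rpow_abs_lt_of_mem_resonantSet hξ hΩ hδε
  have hsum := EuclideanSpace.abs_sum_mul_le (c := fun i => (k i : ℝ)) (by simpa using hk) (ω ξ)
  have := mul_le_mul_of_nonneg_left (hωρ ξ hξ.1) (by positivity : (0 : ℝ) ≤ d * K)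
  rw [Real.le_rpow_inv_iff_of_pos (abs_nonneg _) (by positivity) hα]
  linarith

theorem abs_inner_sub_le_of_mem_resonantSet (hε : 0 ≤ ε) (hεM : ε * M ≤ 1 / 4)
    (hωinv : ∀ ξ ∈ O, ∀ η ∈ O, ‖ξ - η‖ ≤ M * ‖ω ξ - ω η‖) {k : Fin d → ℤ} {n : ℤ}
    (hΩlip : ∀ ξ ∈ O, ∀ η ∈ O, |Ω n ξ - Ω n η| ≤ ε * ‖ξ - η‖) {ξ η : EuclideanSpace ℝ (Fin d)}
    (hξ : ξ ∈ resonantSet O ω Ω δ k n) (hη : η ∈ resonantSet O ω Ω δ k n) :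
    |⟪WithLp.toLp 2 fun i => (k i : ℝ), ω ξ - ω η⟫| ≤ 2 * δ + ‖ω ξ - ω η‖ / 4 := by
  have hsplit : ⟪WithLp.toLp 2 fun i => (k i : ℝ), ω ξ - ω η⟫ =
      ((∑ i, (k i : ℝ) * ω ξ i) + Ω n ξ) - ((∑ i, (k i : ℝ) * ω η i) + Ω n η)
        - (Ω n ξ - Ω n η) := by
    rw [inner_sub_right, EuclideanSpace.real_inner_toLp_left,
      EuclideanSpace.real_inner_toLp_left]
    ring
  have hΩ : |Ω n ξ - Ω n η| ≤ ‖ω ξ - ω η‖ / 4 := calc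
    |Ω n ξ - Ω n η| ≤ ε * (M * ‖ω ξ - ω η‖) :=
      (hΩlip ξ hξ.1 η hη.1).trans (mul_le_mul_of_nonneg_left (hωinv ξ hξ.1 η hη.1) hε)
    _ ≤ ‖ω ξ - ω η‖ / 4 := by nlinarith [norm_nonneg (ω ξ - ω η)]
  rw [hsplit]
  set a := (∑ i, (k i : ℝ) * ω ξ i) + Ω n ξ
  set b := (∑ i, (k i : ℝ) * ω η i) + Ω n η
  calc |a - b - (Ω n ξ - Ω n η)| ≤ |a| + |b| + |Ω n ξ - Ω n η| :=
        (abs_sub _ _).trans (by gcongr; exact abs_sub _ _)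
    _ ≤ 2 * δ + ‖ω ξ - ω η‖ / 4 := by linarith [hξ.2, hη.2]

theorem volume_resonantSet_le (hδ : 0 < δ) (hρ : 0 < ρ) (hM : 0 ≤ M) (hε : 0 ≤ ε)
    (hεM : ε * M ≤ 1 / 4)
    (hδε : δ + ε < lam) (hωρ : ∀ ξ ∈ O, ‖ω ξ‖ ≤ ρ)
    (hωinv : ∀ ξ ∈ O, ∀ η ∈ O, ‖ξ - η‖ ≤ M * ‖ω ξ - ω η‖) (k : Fin d → ℤ) {n : ℤ}
    (hΩ : ∀ ξ ∈ O, |Ω n ξ - (|n| : ℝ) ^ α - lam| ≤ ε)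
    (hΩlip : ∀ ξ ∈ O, ∀ η ∈ O, |Ω n ξ - Ω n η| ≤ ε * ‖ξ - η‖) :
    volume (resonantSet O ω Ω δ k n) ≤
      ENNReal.ofReal (M ^ d * (4 * δ / ρ) *
        volume.real (ball (0 : EuclideanSpace ℝ (Fin d)) (2 * ρ + 2 * δ))) := by
  rcases eq_or_ne k 0 with rfl | hk
  · suffices resonantSet O ω Ω δ 0 n = ∅ by simp [this]
    refine Set.eq_empty_of_forall_notMem fun ξ hξ => ?_
    have := rpow_abs_lt_of_mem_resonantSet hξ (hΩ ξ hξ.1) hδε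
    simp only [Pi.zero_apply, Int.cast_zero, zero_mul, Finset.sum_const_zero, abs_zero] at this
    exact this.not_ge (by positivity)
  set v : EuclideanSpace ℝ (Fin d) := WithLp.toLp 2 fun i => (k i : ℝ)
  have hv : 1 ≤ ‖v‖ := EuclideanSpace.one_le_norm_toLp_intCast hk
  have hthin : ∀ a ∈ ω '' resonantSet O ω Ω δ k n, ∀ b ∈ ω '' resonantSet O ω Ω δ k n,
      |⟪‖v‖⁻¹ • v, a - b⟫| ≤ 2 * δ + ‖a - b‖ / 4 := by
    rintro _ ⟨ξ, hξ, rfl⟩ _ ⟨η, hη, rfl⟩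
    rw [real_inner_smul_left, abs_mul, abs_inv, abs_norm]
    refine (mul_le_of_le_one_left (abs_nonneg _) (inv_le_one_of_one_le₀ hv)).trans ?_
    exact abs_inner_sub_le_of_mem_resonantSet hε hεM hωinv hΩlip hξ hη
  have himage : ω '' resonantSet O ω Ω δ k n ⊆ closedBall 0 ρ := by
    rintro _ ⟨ξ, hξ, rfl⟩
    exact mem_closedBall_zero_iff.2 (hωρ ξ hξ.1)
  have hinv : ∀ ξ ∈ resonantSet O ω Ω δ k n, ∀ η ∈ resonantSet O ω Ω δ k n,
      dist ξ η ≤ M.toNNReal * dist (ω ξ) (ω η) := fun ξ hξ η hη => by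
    rw [dist_eq_norm, dist_eq_norm]
    exact (hωinv ξ hξ.1 η hη.1).trans
      (mul_le_mul_of_nonneg_right (Real.le_coe_toNNReal M) (norm_nonneg _))
  calc volume (resonantSet O ω Ω δ k n)
      ≤ ENNReal.ofReal M ^ d * volume (ω '' resonantSet O ω Ω δ k n) := by
        have := addHaar_le_of_dist_le_mul volume hinv
        rwa [finrank_euclideanSpace_fin] at this
    _ ≤ _ := by
        rw [ENNReal.ofReal_mul (by positivity), ENNReal.ofReal_mul (by positivity),
          ENNReal.ofReal_pow hM, ofReal_measureReal, mul_assoc]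
        gcongr
        rw [show 4 * δ = 2 * (2 * δ) by ring]
        exact measure_le_of_abs_inner_sub_le volume
          (norm_smul_inv_norm (norm_pos_iff.1 (by linarith))) (by positivity) hρ himage hthin

theorem volume_biUnion_resonantSet_le (hα : 0 < α) (hδ : 0 < δ) (hρ : 0 < ρ) (hM : 0 ≤ M)
    (hε : 0 ≤ ε) (hεM : ε * M ≤ 1 / 4) (hδε : δ + ε < lam) (hωρ : ∀ ξ ∈ O, ‖ω ξ‖ ≤ ρ)
    (hωinv : ∀ ξ ∈ O, ∀ η ∈ O, ‖ξ - η‖ ≤ M * ‖ω ξ - ω η‖)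
    (hΩ : ∀ n : ℤ, ∀ ξ ∈ O, |Ω n ξ - (|n| : ℝ) ^ α - lam| ≤ ε)
    (hΩlip : ∀ n : ℤ, ∀ ξ ∈ O, ∀ η ∈ O, |Ω n ξ - Ω n η| ≤ ε * ‖ξ - η‖) {K : ℝ} (hK : 0 ≤ K) :
    volume (⋃ k ∈ {k : Fin d → ℤ | ∀ i, (|k i| : ℝ) ≤ K}, ⋃ n : ℤ, resonantSet O ω Ω δ k n) ≤
      ENNReal.ofReal ((2 * K + 1) ^ d * (2 * ((d : ℝ) * ρ * K) ^ α⁻¹ + 1) *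
        (M ^ d * (4 * δ / ρ) *
          volume.real (ball (0 : EuclideanSpace ℝ (Fin d)) (2 * ρ + 2 * δ)))) := by
  set R := ((d : ℝ) * ρ * K) ^ α⁻¹
  set Fk := Fintype.piFinset fun _ : Fin d => Finset.Icc (-⌊K⌋) ⌊K⌋
  set Fn := Finset.Icc (-⌊R⌋) ⌊R⌋
  have hcover : (⋃ k ∈ {k : Fin d → ℤ | ∀ i, (|k i| : ℝ) ≤ K}, ⋃ n : ℤ, resonantSet O ω Ω δ k n)
      ⊆ ⋃ k ∈ Fk, ⋃ n ∈ Fn, resonantSet O ω Ω δ k n := by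
    simp only [Set.iUnion_subset_iff]
    intro k hk n ξ hξ
    have hn := abs_le_of_mem_resonantSet hα hωρ hK hk hξ (hΩ n ξ hξ.1) hδε
    exact Set.mem_biUnion (Fintype.mem_piFinset.2 fun i => mem_Icc_floor_of_abs_le (hk i))
      (Set.mem_biUnion (mem_Icc_floor_of_abs_le hn) hξ)
  have hcard : ((Fk.card * Fn.card : ℕ) : ℝ) ≤ (2 * K + 1) ^ d * (2 * R + 1) := by
    rw [Fintype.card_piFinset, Finset.prod_const, Finset.card_univ, Fintype.card_fin]
    push_cast
    gcongr
    · exact card_Icc_floor_le hK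
    · exact card_Icc_floor_le (by positivity)
  calc _ ≤ volume (⋃ k ∈ Fk, ⋃ n ∈ Fn, resonantSet O ω Ω δ k n) := measure_mono hcover
    _ ≤ ∑ k ∈ Fk, ∑ n ∈ Fn, volume (resonantSet O ω Ω δ k n) :=
        (measure_biUnion_finset_le _ _).trans
          (Finset.sum_le_sum fun _ _ => measure_biUnion_finset_le _ _)
    _ ≤ ∑ k ∈ Fk, ∑ n ∈ Fn, ENNReal.ofReal (M ^ d * (4 * δ / ρ) *
          volume.real (ball (0 : EuclideanSpace ℝ (Fin d)) (2 * ρ + 2 * δ))) := by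
        gcongr with k _ n _
        exact volume_resonantSet_le hδ hρ hM hε hεM hδε hωρ hωinv k (hΩ n) (hΩlip n)
    _ = ENNReal.ofReal ((Fk.card * Fn.card : ℕ) * (M ^ d * (4 * δ / ρ) *
          volume.real (ball (0 : EuclideanSpace ℝ (Fin d)) (2 * ρ + 2 * δ)))) := by
        rw [ENNReal.ofReal_mul (Nat.cast_nonneg _), ENNReal.ofReal_natCast]
        simp [mul_assoc]
    _ ≤ _ := by gcongr

end Resonance

theorem two_mul_add_one_pow_mul_le {d : ℕ} {α τ γ c K : ℝ} (hα : 0 < α) (hτ : 0 < τ)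
    (hγ : 0 < γ) (hγ1 : γ ≤ 1) (hc : 0 ≤ c) (hK : 1 ≤ K) :
    (2 * K + 1) ^ d * (2 * (c * K) ^ α⁻¹ + 1) * (γ * K ^ (-(2 * τ))) ≤
      3 ^ d * (2 * c ^ α⁻¹ + 1) * (γ ^ ((1 : ℝ) / 2) * K ^ (-(τ - d - 2 / α))) := by
  have hK0 : 0 < K := by linarith
  have hKα : 1 ≤ K ^ α⁻¹ := Real.one_le_rpow hK (by positivity)
  have hcount_k : (2 * K + 1) ^ d ≤ 3 ^ d * K ^ (d : ℝ) := by
    rw [Real.rpow_natCast, ← mul_pow]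
    exact pow_le_pow_left₀ (by positivity) (by linarith) d
  have hcount_n : 2 * (c * K) ^ α⁻¹ + 1 ≤ (2 * c ^ α⁻¹ + 1) * K ^ α⁻¹ := by
    rw [Real.mul_rpow hc hK0.le]
    nlinarith [Real.rpow_nonneg hc α⁻¹]
  have hγ_le : γ ≤ γ ^ ((1 : ℝ) / 2) := by
    simpa using Real.rpow_le_rpow_of_exponent_ge hγ hγ1 (by norm_num : (1 : ℝ) / 2 ≤ 1)
  have hexp : K ^ (d : ℝ) * K ^ α⁻¹ * K ^ (-(2 * τ)) ≤ K ^ (-(τ - d - 2 / α)) := by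
    rw [← Real.rpow_add hK0, ← Real.rpow_add hK0]
    refine Real.rpow_le_rpow_of_exponent_le hK ?_
    have : 0 < α⁻¹ := inv_pos.2 hα
    rw [div_eq_mul_inv]
    linarith
  calc (2 * K + 1) ^ d * (2 * (c * K) ^ α⁻¹ + 1) * (γ * K ^ (-(2 * τ)))
      ≤ (3 ^ d * K ^ (d : ℝ)) * ((2 * c ^ α⁻¹ + 1) * K ^ α⁻¹) *
          (γ ^ ((1 : ℝ) / 2) * K ^ (-(2 * τ))) := by
        gcongr
    _ = 3 ^ d * (2 * c ^ α⁻¹ + 1) *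
          (γ ^ ((1 : ℝ) / 2) * (K ^ (d : ℝ) * K ^ α⁻¹ * K ^ (-(2 * τ)))) := by
        ring
    _ ≤ _ := by gcongr

theorem stmt_10_general (d : ℕ) (α lam ρ M : ℝ)
    (hα0 : 0 < α) (hlam : 0 < lam) (hρ : 0 < ρ) (hM : 0 < M) :
    ∃ C : ℝ, 0 < C ∧
      ∀ (γ ε K τ₁ : ℝ), 0 < γ → γ ≤ 1 → 0 ≤ ε → 1 ≤ K → 0 < τ₁ →
        γ ≤ lam / 4 → ε ≤ lam / 4 → ε * M ≤ 1 / 4 →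
      ∀ (O : Set (EuclideanSpace ℝ (Fin d))), MeasurableSet O →
      ∀ ω : EuclideanSpace ℝ (Fin d) → EuclideanSpace ℝ (Fin d),
        (∀ ξ ∈ O, ‖ω ξ‖ ≤ ρ) →
        (∀ ξ ∈ O, ∀ η ∈ O, ‖ξ - η‖ ≤ M * ‖ω ξ - ω η‖) →
      ∀ Ω : ℤ → EuclideanSpace ℝ (Fin d) → ℝ,
        (∀ n : ℤ, ∀ ξ ∈ O, |Ω n ξ - (|n| : ℝ) ^ α - lam| ≤ ε) →
        (∀ n : ℤ, ∀ ξ ∈ O, ∀ η ∈ O, |Ω n ξ - Ω n η| ≤ ε * ‖ξ - η‖) →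
        volume (⋃ k ∈ {k : Fin d → ℤ | ∀ i, (|k i| : ℝ) ≤ K}, ⋃ n : ℤ,
            {ξ ∈ O | |(∑ i, (k i : ℝ) * ω ξ i) + Ω n ξ| ≤ γ * K ^ (-(2 * τ₁))}) ≤
          ENNReal.ofReal (C * γ ^ ((1 : ℝ) / 2) * K ^ (-(τ₁ - d - 2 / α))) := by
  set V := volume.real (ball (0 : EuclideanSpace ℝ (Fin d)) (2 * ρ + lam))
  have hV : 0 < V :=
    ENNReal.toReal_pos (measure_ball_pos _ _ (by positivity)).ne' measure_ball_lt_top.ne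
  refine ⟨3 ^ d * (2 * ((d : ℝ) * ρ) ^ α⁻¹ + 1) * (M ^ d * (4 / ρ) * V), by positivity, ?_⟩
  intro γ ε K τ₁ hγ hγ1 hε hK hτ hγlam hεlam hεM O _ ω hωρ hωinv Ω hΩ hΩlip
  set δ := γ * K ^ (-(2 * τ₁))
  have hδ : 0 < δ := mul_pos hγ (Real.rpow_pos_of_pos (by linarith) _)
  have hδγ : δ ≤ γ :=
    mul_le_of_le_one_right hγ.le (Real.rpow_le_one_of_one_le_of_nonpos hK (by linarith))
  have hcount := two_mul_add_one_pow_mul_le (d := d) hα0 hτ hγ hγ1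
    (by positivity : 0 ≤ (d : ℝ) * ρ) hK
  have hball : volume.real (ball (0 : EuclideanSpace ℝ (Fin d)) (2 * ρ + 2 * δ)) ≤ V :=
    measureReal_mono (ball_subset_ball (by linarith))
  refine (volume_biUnion_resonantSet_le hα0 hδ hρ hM.le hε hεM (by linarith) hωρ hωinv hΩ hΩlip
    (by linarith : 0 ≤ K)).trans (ENNReal.ofReal_le_ofReal ?_)
  calc _ ≤ (2 * K + 1) ^ d * (2 * ((d : ℝ) * ρ * K) ^ α⁻¹ + 1) * (M ^ d * (4 * δ / ρ) * V) := by
        gcongr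
    _ = (2 * K + 1) ^ d * (2 * ((d : ℝ) * ρ * K) ^ α⁻¹ + 1) * δ * (M ^ d * (4 / ρ) * V) := by
        ring
    _ ≤ _ := mul_le_mul_of_nonneg_right hcount (by positivity)
    _ = _ := by ring

theorem stmt_10 (d : ℕ) (hd : 1 ≤ d) (α lam ρ M : ℝ)
    (hα0 : 0 < α) (hα1 : α < 1) (hlam : 0 < lam) (hρ : 0 < ρ) (hM : 0 < M) :
    ∃ C : ℝ, 0 < C ∧
      ∀ (γ ε K τ₁ : ℝ), 0 < γ → γ ≤ 1 → 0 ≤ ε → 1 ≤ K → 0 < τ₁ →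
        γ ≤ lam / 4 → ε ≤ lam / 4 → ε * M ≤ 1 / 4 →
      ∀ (O : Set (EuclideanSpace ℝ (Fin d))), MeasurableSet O →
      ∀ ω : EuclideanSpace ℝ (Fin d) → EuclideanSpace ℝ (Fin d),
        (∀ ξ ∈ O, ‖ω ξ‖ ≤ ρ) →
        (∀ ξ ∈ O, ∀ η ∈ O, ‖ξ - η‖ ≤ M * ‖ω ξ - ω η‖) →
      ∀ Ω : ℤ → EuclideanSpace ℝ (Fin d) → ℝ,
        (∀ n : ℤ, ∀ ξ ∈ O, |Ω n ξ - (|n| : ℝ) ^ α - lam| ≤ ε) →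
        (∀ n : ℤ, ∀ ξ ∈ O, ∀ η ∈ O, |Ω n ξ - Ω n η| ≤ ε * ‖ξ - η‖) →
        volume (⋃ k ∈ {k : Fin d → ℤ | ∀ i, (|k i| : ℝ) ≤ K}, ⋃ n : ℤ,
            {ξ ∈ O | |(∑ i, (k i : ℝ) * ω ξ i) + Ω n ξ| ≤ γ * K ^ (-(2 * τ₁))}) ≤
          ENNReal.ofReal (C * γ ^ ((1 : ℝ) / 2) * K ^ (-(τ₁ - d - 2 / α))) :=
  stmt_10_general d α lam ρ M hα0 hlam hρ hM
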